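/- Let I : ℝ^d → ℝ be continuously differentiable with ∇I Lipschitz continuous with constant L, and let S, T_1, …, T_m : ℝ^d → ℝ^{d×d} satisfy ‖S(z)‖ ≤ c and ‖T_r(z)‖ ≤ c (operator norm) for all z ∈ ℝ^d. Let h, w_1, …, w_m ∈ ℝ and set ε := c(|h| + Σ_{r=1}^m |w_r|). If εL < 2 and x, y ∈ ℝ^d satisfy y = x + (h S((x+y)/2) + Σ_{r=1}^m w_r T_r((x+y)/2)) · ∫₀¹ ∇I(x + τ(y − x)) dτ, then |y − x| ≤ ε |∇I(x)| / (1 − εL/2). -/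

import Mathlib

/-!
Write `g` for the averaged gradient `∫₀¹ ∇I(x + τ(y - x)) dτ`. The step reads `y - x = M g` with
`‖M‖ ≤ ε`, and the Lipschitz bound on `∇I` gives `|g - ∇I(x)| ≤ ∫₀¹ Lτ|y - x| dτ = L|y - x|/2`.
Hence `|y - x| ≤ ε(|∇I(x)| + L|y - x|/2)`, and since `εL/2 < 1` the term in `|y - x|` can be
absorbed into the left-hand side.
-/

theorem norm_smul_add_sum_smul_le {V ι : Type*} [SeminormedAddCommGroup V] [NormedSpace ℝ V]
    [Fintype ι] {A : V} {B : ι → V} {c : ℝ} (hA : ‖A‖ ≤ c) (hB : ∀ r, ‖B r‖ ≤ c)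
    (h : ℝ) (w : ι → ℝ) :
    ‖h • A + ∑ r, w r • B r‖ ≤ c * (|h| + ∑ r, |w r|) :=
  calc ‖h • A + ∑ r, w r • B r‖ ≤ ‖h • A‖ + ∑ r, ‖w r • B r‖ :=
        (norm_add_le _ _).trans (add_le_add_right (norm_sum_le _ _) _)
    _ ≤ |h| * c + ∑ r, |w r| * c := by
        gcongr with r
        · rw [norm_smul, Real.norm_eq_abs]; gcongr
        · rw [norm_smul, Real.norm_eq_abs]; gcongr; exact hB r
    _ = c * (|h| + ∑ r, |w r|) := by rw [← Finset.sum_mul]; ring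

theorem norm_integral_segment_sub_le {E F : Type*} [NormedAddCommGroup E] [NormedSpace ℝ E]
    [NormedAddCommGroup F] [NormedSpace ℝ F] [CompleteSpace F] {f : E → F} {L : ℝ}
    (hf : ∀ a b, ‖f a - f b‖ ≤ L * ‖a - b‖) (x y : E) :
    ‖(∫ τ in (0:ℝ)..1, f (x + τ • (y - x))) - f x‖ ≤ L * ‖y - x‖ / 2 := by
  have hcont : Continuous f :=
    (LipschitzWith.of_dist_le' (K := L) fun a b => by
      simpa only [dist_eq_norm] using hf a b).continuous
  have hpath : Continuous fun τ : ℝ => f (x + τ • (y - x)) := by fun_prop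
  have hsub : (∫ τ in (0:ℝ)..1, f (x + τ • (y - x))) - f x
      = ∫ τ in (0:ℝ)..1, (f (x + τ • (y - x)) - f x) := by
    rw [intervalIntegral.integral_sub (hpath.intervalIntegrable _ _) intervalIntegrable_const,
      intervalIntegral.integral_const, sub_zero, one_smul]
  calc ‖(∫ τ in (0:ℝ)..1, f (x + τ • (y - x))) - f x‖
      ≤ ∫ τ in (0:ℝ)..1, L * ‖y - x‖ * τ := by
        rw [hsub]
        refine intervalIntegral.norm_integral_le_of_norm_le zero_le_one
          (Filter.Eventually.of_forall fun τ hτ => ?_)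
          ((continuous_const_mul _).intervalIntegrable _ _)
        calc ‖f (x + τ • (y - x)) - f x‖ ≤ L * ‖x + τ • (y - x) - x‖ := hf _ _
          _ = L * ‖y - x‖ * τ := by
            rw [add_sub_cancel_left, norm_smul, Real.norm_of_nonneg hτ.1.le]; ring
    _ = L * ‖y - x‖ / 2 := by
        rw [intervalIntegral.integral_const_mul, integral_id]; ring

theorem le_div_of_le_mul_add {u ε a κ : ℝ} (hεκ : ε * κ < 1) (hu : u ≤ ε * (a + κ * u)) :
    u ≤ ε * a / (1 - ε * κ) := by
  rw [le_div_iff₀ (by linarith)]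
  linarith

theorem one_step_displacement_bound_general
    (d m : ℕ) (I : EuclideanSpace ℝ (Fin d) → ℝ)
    (L : ℝ)
    (hLip : ∀ z₁ z₂ : EuclideanSpace ℝ (Fin d),
      ‖gradient I z₁ - gradient I z₂‖ ≤ L * ‖z₁ - z₂‖)
    (S : EuclideanSpace ℝ (Fin d) → Matrix (Fin d) (Fin d) ℝ)
    (T : Fin m → EuclideanSpace ℝ (Fin d) → Matrix (Fin d) (Fin d) ℝ)
    (c₀ : ℝ)
    (hSnorm : ∀ z, ‖Matrix.toEuclideanCLM (𝕜 := ℝ) (S z)‖ ≤ c₀)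
    (hTnorm : ∀ r z, ‖Matrix.toEuclideanCLM (𝕜 := ℝ) (T r z)‖ ≤ c₀)
    (h : ℝ) (w : Fin m → ℝ) (ε : ℝ)
    (hε : ε = c₀ * (|h| + ∑ r, |w r|))
    (hεL : ε * L < 2)
    (x y : EuclideanSpace ℝ (Fin d))
    (hstep : y = x + Matrix.toEuclideanCLM (𝕜 := ℝ)
        (h • S ((2:ℝ)⁻¹ • (x + y)) + ∑ r, w r • T r ((2:ℝ)⁻¹ • (x + y)))
        (∫ τ in (0:ℝ)..1, gradient I (x + τ • (y - x)))) :
    ‖y - x‖ ≤ ε * ‖gradient I x‖ / (1 - ε * L / 2) := by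
  set z := (2:ℝ)⁻¹ • (x + y)
  set M := Matrix.toEuclideanCLM (𝕜 := ℝ) (h • S z + ∑ r, w r • T r z)
  set g := ∫ τ in (0:ℝ)..1, gradient I (x + τ • (y - x))
  have hM : ‖M‖ ≤ ε := by
    simpa only [M, hε, map_add, map_smul, map_sum] using
      norm_smul_add_sum_smul_le (hSnorm z) (fun r => hTnorm r z) h w
  have hε0 : 0 ≤ ε := hε ▸ mul_nonneg ((norm_nonneg _).trans (hSnorm 0)) (by positivity)
  have hg : ‖g - gradient I x‖ ≤ L / 2 * ‖y - x‖ :=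
    (norm_integral_segment_sub_le hLip x y).trans_eq (by ring)
  have hkey : ‖y - x‖ ≤ ε * (‖gradient I x‖ + L / 2 * ‖y - x‖) :=
    calc ‖y - x‖ = ‖M g‖ := by rw [hstep, add_sub_cancel_left]
      _ ≤ ε * ‖g‖ := (M.le_opNorm g).trans (by gcongr)
      _ ≤ ε * (‖gradient I x‖ + L / 2 * ‖y - x‖) := by
        gcongr
        exact (norm_le_norm_add_norm_sub' g (gradient I x)).trans (by gcongr)
  rw [mul_div_assoc ε L 2]
  exact le_div_of_le_mul_add (by linarith) hkey

/-- A priori bound on one step of the implicit conservative method. If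
`∇I` is `L`-Lipschitz, `‖S(z)‖, ‖T_r(z)‖ ≤ c₀`, `ε := c₀(|h| + Σ_r |w_r|)` satisfies
`εL < 2`, and `y = x + (h S((x+y)/2) + Σ_r w_r T_r((x+y)/2)) ∫₀¹ ∇I(x + τ(y − x)) dτ`,
then `|y − x| ≤ ε |∇I(x)| / (1 − εL/2)`. -/
theorem one_step_displacement_bound
    (d m : ℕ) (I : EuclideanSpace ℝ (Fin d) → ℝ) (hI : ContDiff ℝ 1 I)
    (L : ℝ)
    (hLip : ∀ z₁ z₂ : EuclideanSpace ℝ (Fin d),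
      ‖gradient I z₁ - gradient I z₂‖ ≤ L * ‖z₁ - z₂‖)
    (S : EuclideanSpace ℝ (Fin d) → Matrix (Fin d) (Fin d) ℝ)
    (T : Fin m → EuclideanSpace ℝ (Fin d) → Matrix (Fin d) (Fin d) ℝ)
    (c₀ : ℝ)
    (hSnorm : ∀ z, ‖Matrix.toEuclideanCLM (𝕜 := ℝ) (S z)‖ ≤ c₀)
    (hTnorm : ∀ r z, ‖Matrix.toEuclideanCLM (𝕜 := ℝ) (T r z)‖ ≤ c₀)
    (h : ℝ) (w : Fin m → ℝ) (ε : ℝ)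
    (hε : ε = c₀ * (|h| + ∑ r, |w r|))
    (hεL : ε * L < 2)
    (x y : EuclideanSpace ℝ (Fin d))
    (hstep : y = x + Matrix.toEuclideanCLM (𝕜 := ℝ)
        (h • S ((2:ℝ)⁻¹ • (x + y)) + ∑ r, w r • T r ((2:ℝ)⁻¹ • (x + y)))
        (∫ τ in (0:ℝ)..1, gradient I (x + τ • (y - x)))) :
    ‖y - x‖ ≤ ε * ‖gradient I x‖ / (1 - ε * L / 2) :=
  one_step_displacement_bound_general d m I L hLip S T c₀ hSnorm hTnorm h w ε hε hεL x y hstep
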